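/- arXiv:1102.2631 — 6 statements merged into one kernel-verified Lean document; each statement's English description precedes it below -/
import Mathlib

section
/- The real symmetric matrix M = [[1,4,2],[4,3,2],[2,2,3]] is not positive semidefinite; consequently there is no natural number m and no matrix A of size 3×m with nonnegative integer entries such that A * Aᵀ = M. -/
/-!
The quadratic form of `M` takes the value `-4` at `(1, -1, 0)`; and over `ℤ`, as over `ℝ`,
a Gram matrix `A * Aᵀ` is positive semidefinite.
-/

open Matrix

theorem haagerupMatrix_quadForm {R : Type*} [CommRing R] :
    ![(1 : R), -1, 0] ⬝ᵥ (!![(1 : R), 4, 2; 4, 3, 2; 2, 2, 3] *ᵥ ![1, -1, 0]) = -4 := by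
  simp only [dotProduct, mulVec, Fin.sum_univ_three, of_apply, cons_val_zero, cons_val_one, cons_val]
  ring

theorem not_posSemidef_haagerupMatrix {R : Type*} [CommRing R] [PartialOrder R] [StarRing R]
    [TrivialStar R] [IsStrictOrderedRing R] :
    ¬ (!![(1 : R), 4, 2; 4, 3, 2; 2, 2, 3]).PosSemidef := fun h => by
  have := h.dotProduct_mulVec_nonneg ![1, -1, 0]
  rw [star_trivial, haagerupMatrix_quadForm] at this
  norm_num at this

/-- The real symmetric matrix `M = [[1,4,2],[4,3,2],[2,2,3]]` (the reduced fusion matrix of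
`1 + 2ν` in the Haagerup fusion ring `H₄`) is not positive semidefinite; consequently there is
no natural number `m` and no `3 × m` matrix `A` with nonnegative integer entries such that
`A * Aᵀ = M`. -/
theorem stmt_0 :
    ¬ Matrix.PosSemidef (!![(1 : ℝ), 4, 2; 4, 3, 2; 2, 2, 3]) ∧
    ¬ ∃ (m : ℕ) (A : Matrix (Fin 3) (Fin m) ℤ),
        (∀ i j, 0 ≤ A i j) ∧ A * Aᵀ = !![(1 : ℤ), 4, 2; 4, 3, 2; 2, 2, 3] := by
  refine ⟨not_posSemidef_haagerupMatrix, ?_⟩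
  rintro ⟨m, A, -, hA⟩
  apply not_posSemidef_haagerupMatrix (R := ℤ)
  rw [← hA, ← conjTranspose_eq_transpose_of_trivial]
  exact posSemidef_self_mul_conjTranspose A
end

section
/- Let m be a natural number and let A be a 3×m matrix with nonnegative integer entries such that A * Aᵀ = [[2,2,1],[2,2,1],[1,1,2]]. Then there exist three distinct column indices j₀, j₁, j₂ such that the j₀-th column of A is (1,1,1), the j₁-th column is (1,1,0), the j₂-th column is (0,0,1), and every other column of A is zero. -/
/-! Each row of `A` has squared length `2`, so its entries are `0` or `1` and it is the indicator
of a set `Sᵢ` of columns; the Gram matrix `A * Aᵀ` then records the sizes `#(Sᵢ ∩ Sₖ)`. Rows `0`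
and `1` meet in both of their two columns, so `S₀ = S₁`, while `S₀` and `S₂` share exactly one
column `j₀`; their other elements are `j₁` and `j₂`. -/

open Matrix Finset

theorem Finset.exists_eq_pair_of_mem_of_card_eq_two {ι : Type*} [DecidableEq ι] {S : Finset ι}
    {a : ι} (ha : a ∈ S) (hS : #S = 2) : ∃ b, a ≠ b ∧ S = {a, b} := by
  obtain ⟨b, hb⟩ := card_eq_one.mp (by rw [card_erase_of_mem ha, hS] : #(S.erase a) = 1)
  refine ⟨b, fun hab => ?_, ?_⟩
  · simpa [hab] using hb.ge (mem_singleton_self b)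
  · rw [← insert_erase ha, hb]

theorem Finset.exists_eq_pair_pair_of_card_inter_eq_one {ι : Type*} [DecidableEq ι]
    {S T : Finset ι} (hS : #S = 2) (hT : #T = 2) (hST : #(S ∩ T) = 1) :
    ∃ a b c, a ≠ b ∧ a ≠ c ∧ b ≠ c ∧ S = {a, b} ∧ T = {a, c} := by
  obtain ⟨a, ha⟩ := card_eq_one.mp hST
  have haST : a ∈ S ∩ T := ha ▸ mem_singleton_self a
  obtain ⟨b, hab, rfl⟩ := exists_eq_pair_of_mem_of_card_eq_two (mem_inter.mp haST).1 hS
  obtain ⟨c, hac, rfl⟩ := exists_eq_pair_of_mem_of_card_eq_two (mem_inter.mp haST).2 hT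
  refine ⟨a, b, c, hab, hac, fun hbc => hab ?_, rfl, rfl⟩
  have : b ∈ ({a, b} ∩ {a, c} : Finset ι) := by simp [hbc]
  rw [ha, mem_singleton] at this
  exact this.symm

theorem Finset.eq_of_card_eq_card_inter {ι : Type*} [DecidableEq ι]
    {S T : Finset ι} (hS : #S = #(S ∩ T)) (hT : #T = #(S ∩ T)) : S = T :=
  calc S = S ∩ T := (eq_of_subset_of_card_le inter_subset_left hS.le).symm
    _ = T := eq_of_subset_of_card_le inter_subset_right hT.le

theorem eq_zero_or_one_of_dotProduct_self_lt_four {ι : Type*} [Fintype ι] {v : ι → ℤ}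
    (hv : 0 ≤ v) (hvv : v ⬝ᵥ v < 4) (j : ι) : v j = 0 ∨ v j = 1 := by
  have hj : v j * v j ≤ v ⬝ᵥ v :=
    single_le_sum (fun k _ => mul_nonneg (hv k) (hv k)) (mem_univ j)
  have h0 : 0 ≤ v j := hv j
  have : v j < 2 := by nlinarith
  omega

theorem exists_finset_eq_boole {ι R : Type*} [Fintype ι] [DecidableEq ι] [Zero R] [One R]
    {v : ι → R} (hv : ∀ j, v j = 0 ∨ v j = 1) :
    ∃ S : Finset ι, v = fun j => if j ∈ S then 1 else 0 := by
  classical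
  refine ⟨univ.filter (v · = 1), funext fun j => ?_⟩
  rcases hv j with h | h <;> simp [h]

theorem dotProduct_boole_boole {ι R : Type*} [Fintype ι] [DecidableEq ι] [NonAssocSemiring R]
    (S T : Finset ι) :
    ((fun j => if j ∈ S then 1 else 0) ⬝ᵥ fun j => if j ∈ T then (1 : R) else 0) = #(S ∩ T) := by
  simp [dotProduct, inter_comm T S]

/-- If `A` is a `3 × m` matrix with nonnegative integer entries satisfying
`A * Aᵀ = [[2,2,1],[2,2,1],[1,1,2]]` (the reduced fusion matrix of `1 + ν` in the Haagerup
fusion ring `H₄`), then there are three distinct column indices `j₀, j₁, j₂` such that the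
`j₀`-th column of `A` is `(1,1,1)`, the `j₁`-th column is `(1,1,0)`, the `j₂`-th column is
`(0,0,1)`, and every other column of `A` is zero. -/
theorem stmt_1 (m : ℕ) (A : Matrix (Fin 3) (Fin m) ℤ)
    (hA : ∀ i j, 0 ≤ A i j)
    (h : A * Aᵀ = !![(2 : ℤ), 2, 1; 2, 2, 1; 1, 1, 2]) :
    ∃ j₀ j₁ j₂ : Fin m, j₀ ≠ j₁ ∧ j₀ ≠ j₂ ∧ j₁ ≠ j₂ ∧
      (A 0 j₀ = 1 ∧ A 1 j₀ = 1 ∧ A 2 j₀ = 1) ∧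
      (A 0 j₁ = 1 ∧ A 1 j₁ = 1 ∧ A 2 j₁ = 0) ∧
      (A 0 j₂ = 0 ∧ A 1 j₂ = 0 ∧ A 2 j₂ = 1) ∧
      (∀ j, j ≠ j₀ → j ≠ j₁ → j ≠ j₂ → ∀ i, A i j = 0) := by
  have hgram : ∀ i k, A i ⬝ᵥ A k = !![(2 : ℤ), 2, 1; 2, 2, 1; 1, 1, 2] i k := fun i k => by
    rw [← h, mul_apply']
    rfl
  have hrow : ∀ i j, A i j = 0 ∨ A i j = 1 := fun i =>
    eq_zero_or_one_of_dotProduct_self_lt_four (hA i) (by fin_cases i <;> simp [hgram])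
  choose S hS using fun i => exists_finset_eq_boole (hrow i)
  have hcard : ∀ i k, (#(S i ∩ S k) : ℤ) = !![(2 : ℤ), 2, 1; 2, 2, 1; 1, 1, 2] i k :=
    fun i k => by rw [← dotProduct_boole_boole, ← hS, ← hS, hgram]
  have h00 : #(S 0) = 2 := by simpa [← Int.natCast_inj] using hcard 0 0
  have h11 : #(S 1) = 2 := by simpa [← Int.natCast_inj] using hcard 1 1
  have h22 : #(S 2) = 2 := by simpa [← Int.natCast_inj] using hcard 2 2
  have h01 : #(S 0 ∩ S 1) = 2 := by simpa [← Int.natCast_inj] using hcard 0 1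
  have h02 : #(S 0 ∩ S 2) = 1 := by simpa using hcard 0 2
  have hS01 : S 0 = S 1 :=
    eq_of_card_eq_card_inter (h00.trans h01.symm) (h11.trans h01.symm)
  obtain ⟨a, b, c, hab, hac, hbc, hS0, hS2⟩ := exists_eq_pair_pair_of_card_inter_eq_one h00 h22 h02
  have hentry : ∀ i j, A i j = if j ∈ S i then 1 else 0 := fun i => congrFun (hS i)
  refine ⟨a, b, c, hab, hac, hbc, ?_, ?_, ?_, fun j hja hjb hjc i => ?_⟩
  iterate 3 simp [hentry, ← hS01, hS0, hS2, hab, hac, hbc, hab.symm, hac.symm, hbc.symm]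
  fin_cases i <;> simp [hentry, ← hS01, hS0, hS2, hja, hjb, hjc]
end

section
/- Let m be a natural number and let A be a 3×m matrix with nonnegative integer entries such that A * Aᵀ = [[3,1,1],[1,1,1],[1,1,1]]. Then there exist three distinct column indices j₀, j₁, j₂ such that the j₀-th column of A is (1,1,1), and the j₁-th and j₂-th columns are each (1,0,0), and every other column of A is zero. -/
/-!
Rows of `A` are nonnegative integer vectors, and the Gram matrix `A * Aᵀ` records their dot
products. A nonnegative integer vector of squared length `1` is a standard basis vector, one of
squared length `2` is a sum of two distinct ones. So rows `1` and `2` are basis vectors `e a` and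
`e b`, and `e a ⬝ e b = 1` forces `a = b`. Row `0` has `A 0 a = A 0 ⬝ e a = 1`, so subtracting
`e a` from it leaves a nonnegative vector of squared length `3 - 2 + 1 = 2`, i.e. `e c + e d`
with `c ≠ d`, both different from `a` because the difference vanishes at `a`.
-/

open Matrix

namespace Matrix

variable {ι : Type*} {v : ι → ℤ}

lemma exists_eq_one_of_dotProduct_self_lt_four [Fintype ι] (hv : 0 ≤ v) (h0 : v ≠ 0)
    (h : v ⬝ᵥ v < 4) : ∃ j, v j = 1 := by
  obtain ⟨j, hj⟩ := Function.ne_iff.mp h0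
  have hle : v j * v j ≤ v ⬝ᵥ v :=
    Finset.single_le_sum (f := fun k => v k * v k) (fun k _ => mul_self_nonneg (v k))
      (Finset.mem_univ j)
  have hpos : 0 < v j := lt_of_le_of_ne (hv j) (Ne.symm hj)
  exact ⟨j, by nlinarith⟩

lemma sub_single_one_nonneg [DecidableEq ι] {j : ι} (hv : 0 ≤ v) (hj : v j = 1) :
    0 ≤ v - Pi.single j 1 := by
  intro k
  by_cases hk : k = j
  · subst hk; simp [hj]
  · simpa [hk] using hv k

lemma dotProduct_self_sub_single [Fintype ι] [DecidableEq ι] {j : ι} (hj : v j = 1) :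
    (v - Pi.single j 1) ⬝ᵥ (v - Pi.single j 1) = v ⬝ᵥ v - 1 := by
  simp only [sub_dotProduct, dotProduct_sub, dotProduct_single_one, single_one_dotProduct,
    Pi.sub_apply, Pi.single_eq_same, hj]
  ring

lemma exists_eq_single_of_dotProduct_self_eq_one [Fintype ι] [DecidableEq ι] (hv : 0 ≤ v)
    (h : v ⬝ᵥ v = 1) : ∃ j, v = Pi.single j 1 := by
  obtain ⟨j, hj⟩ := exists_eq_one_of_dotProduct_self_lt_four hv
    (by rintro rfl; simp at h) (by omega)
  have hrest : (v - Pi.single j 1) ⬝ᵥ (v - Pi.single j 1) = 0 := by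
    rw [dotProduct_self_sub_single hj, h, sub_self]
  exact ⟨j, sub_eq_zero.mp (dotProduct_self_eq_zero.mp hrest)⟩

lemma exists_eq_single_add_single_of_dotProduct_self_eq_two [Fintype ι] [DecidableEq ι]
    (hv : 0 ≤ v) (h : v ⬝ᵥ v = 2) :
    ∃ j k, j ≠ k ∧ v = Pi.single j 1 + Pi.single k 1 := by
  obtain ⟨j, hj⟩ := exists_eq_one_of_dotProduct_self_lt_four hv
    (by rintro rfl; simp at h) (by omega)
  obtain ⟨k, hk⟩ := exists_eq_single_of_dotProduct_self_eq_one (sub_single_one_nonneg hv hj)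
    (by rw [dotProduct_self_sub_single hj, h]; norm_num)
  refine ⟨j, k, ?_, by rw [← hk]; abel⟩
  rintro rfl
  simpa [hj] using congrFun hk j

end Matrix

/-- If `A` is a `3 × m` matrix with nonnegative integer entries satisfying
`A * Aᵀ = [[3,1,1],[1,1,1],[1,1,1]]` (the reduced fusion matrix of `1 + η` in the Haagerup
fusion ring `H₄`), then there are three distinct column indices `j₀, j₁, j₂` such that the
`j₀`-th column of `A` is `(1,1,1)`, the `j₁`-th and `j₂`-th columns are each `(1,0,0)`, and
every other column of `A` is zero. -/
theorem stmt_2 (m : ℕ) (A : Matrix (Fin 3) (Fin m) ℤ)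
    (hA : ∀ i j, 0 ≤ A i j)
    (h : A * Aᵀ = !![(3 : ℤ), 1, 1; 1, 1, 1; 1, 1, 1]) :
    ∃ j₀ j₁ j₂ : Fin m, j₀ ≠ j₁ ∧ j₀ ≠ j₂ ∧ j₁ ≠ j₂ ∧
      (A 0 j₀ = 1 ∧ A 1 j₀ = 1 ∧ A 2 j₀ = 1) ∧
      (A 0 j₁ = 1 ∧ A 1 j₁ = 0 ∧ A 2 j₁ = 0) ∧
      (A 0 j₂ = 1 ∧ A 1 j₂ = 0 ∧ A 2 j₂ = 0) ∧
      (∀ j, j ≠ j₀ → j ≠ j₁ → j ≠ j₂ → ∀ i, A i j = 0) := by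
  have hgram (i k : Fin 3) : A i ⬝ᵥ A k = !![(3 : ℤ), 1, 1; 1, 1, 1; 1, 1, 1] i k := by
    rw [← h]; rfl
  obtain ⟨a, hA1⟩ := exists_eq_single_of_dotProduct_self_eq_one (hA 1) (hgram 1 1)
  obtain ⟨b, hA2⟩ := exists_eq_single_of_dotProduct_self_eq_one (hA 2) (hgram 2 2)
  obtain rfl : a = b := by
    simpa [hA1, hA2, Pi.single_apply, eq_comm] using hgram 1 2
  have hA0a : A 0 a = 1 := by
    simpa [hA1, dotProduct_single_one] using hgram 0 1
  obtain ⟨c, d, hcd, hA0⟩ := exists_eq_single_add_single_of_dotProduct_self_eq_two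
    (sub_single_one_nonneg (hA 0) hA0a) (by rw [dotProduct_self_sub_single hA0a, hgram 0 0]; rfl)
  rw [sub_eq_iff_eq_add] at hA0
  obtain ⟨hca, hda⟩ : c ≠ a ∧ d ≠ a := by
    have ha := congrFun hA0 a
    simp only [Pi.add_apply, Pi.single_apply, if_true, hA0a] at ha
    constructor <;> rintro rfl <;> split_ifs at ha <;> omega
  refine ⟨a, c, d, hca.symm, hda.symm, hcd, ?_, ?_, ?_, fun j hja hjc hjd i => ?_⟩
  · simp [hA0, hA1, hA2, hca, hda]
  · simp [hA0, hA1, hA2, hca, hcd]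
  · simp [hA0, hA1, hA2, hda, hcd.symm]
  · fin_cases i <;> simp [hA0, hA1, hA2, hja, hjc, hjd]
end

section
/- Fix a natural number n ≥ 1. On the free ℤ-module with basis indexed by (ℤ/nℤ) × {0,1}, write α_g for the basis element (g,0) and α_gξ for (g,1), and define a bilinear multiplication on basis elements by: α_g·α_h = α_{g+h}, α_g·(α_hξ) = α_{g+h}ξ, (α_gξ)·α_h = α_{g−h}ξ, and (α_gξ)·(α_hξ) = α_{g−h} + Σ_{k ∈ ℤ/nℤ} α_kξ. Then this multiplication is associative and α_0 is a two-sided unit; that is, these structure constants define an associative unital ring structure on ℤ^{2n}. -/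
/-!
The product is the bilinear extension of structure constants `c σ τ ρ`, so it is associative as
soon as `(σ τ) υ = σ (τ υ)` for basis elements, and `α_0` is a two-sided unit as soon as it is
one on basis elements. On basis triples this is a direct computation; in the cases where
`Σ_k α_k ξ` appears it rests on the fact that `k ↦ g + k`, `k ↦ k - u` and `k ↦ g - k` permute
`ℤ/nℤ`, so each of them takes any given value exactly once.
-/

open Finset

/-- Structure constants of the Izumi fusion ring `I₂(n)`: the basis is `ZMod n × Bool`, where
`(g, false)` stands for `α_g` and `(g, true)` stands for `α_g ξ`.  The products of basis
elements are `α_g·α_h = α_{g+h}`, `α_g·(α_h ξ) = α_{g+h} ξ`, `(α_g ξ)·α_h = α_{g−h} ξ`, and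
`(α_g ξ)·(α_h ξ) = α_{g−h} + Σ_{k} α_k ξ`. -/
def izumiBasisMul (n : ℕ) : ZMod n × Bool → ZMod n × Bool → (ZMod n × Bool → ℤ)
  | (g, false), (h, false) => fun p => if p = (g + h, false) then 1 else 0
  | (g, false), (h, true)  => fun p => if p = (g + h, true) then 1 else 0
  | (g, true),  (h, false) => fun p => if p = (g - h, true) then 1 else 0
  | (g, true),  (h, true)  => fun p =>
      (if p = (g - h, false) then 1 else 0) + (if p.2 = true then 1 else 0)

/-- The bilinear extension of the structure constants `izumiBasisMul` to the free `ℤ`-module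
`ℤ^{2n}` of functions `ZMod n × Bool → ℤ`. -/
def izumiMul (n : ℕ) [NeZero n] (x y : ZMod n × Bool → ℤ) : ZMod n × Bool → ℤ :=
  fun ρ => ∑ σ : ZMod n × Bool, ∑ τ : ZMod n × Bool, x σ * y τ * izumiBasisMul n σ τ ρ

/-- The basis element `α_0` of the Izumi fusion ring `I₂(n)`. -/
def izumiOne (n : ℕ) : ZMod n × Bool → ℤ :=
  fun p => if p = ((0 : ZMod n), false) then 1 else 0

section StructureConstants

variable {I R : Type*} [Fintype I] [CommSemiring R]

def structConstMul (c : I → I → I → R) (x y : I → R) : I → R :=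
  fun ρ => ∑ σ, ∑ τ, x σ * y τ * c σ τ ρ

theorem structConstMul_structConstMul_left_apply (c : I → I → I → R) (x y z : I → R) (ρ : I) :
    structConstMul c (structConstMul c x y) z ρ =
      ∑ σ, ∑ τ, ∑ υ, x σ * y τ * z υ * ∑ π, c σ τ π * c π υ ρ := by
  simp only [structConstMul, sum_mul]
  rw [sum_comm_cycle]
  refine sum_congr rfl fun σ _ => ?_
  rw [sum_comm_cycle]
  refine sum_congr rfl fun τ _ => ?_
  rw [sum_comm]
  simp only [mul_sum]
  exact sum_congr rfl fun υ _ => sum_congr rfl fun π _ => by ring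

theorem structConstMul_structConstMul_right_apply (c : I → I → I → R) (x y z : I → R) (ρ : I) :
    structConstMul c x (structConstMul c y z) ρ =
      ∑ σ, ∑ τ, ∑ υ, x σ * y τ * z υ * ∑ π, c τ υ π * c σ π ρ := by
  simp only [structConstMul, mul_sum, sum_mul]
  refine sum_congr rfl fun σ _ => ?_
  rw [← sum_comm_cycle]
  exact sum_congr rfl fun τ _ => sum_congr rfl fun υ _ => sum_congr rfl fun π _ => by ring

theorem structConstMul_assoc (c : I → I → I → R)
    (hc : ∀ σ τ υ ρ, ∑ π, c σ τ π * c π υ ρ = ∑ π, c τ υ π * c σ π ρ) (x y z : I → R) :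
    structConstMul c (structConstMul c x y) z = structConstMul c x (structConstMul c y z) := by
  funext ρ
  simp only [structConstMul_structConstMul_left_apply, structConstMul_structConstMul_right_apply,
    hc]

theorem structConstMul_single_left [DecidableEq I] (c : I → I → I → R) (e : I)
    (hc : ∀ τ, c e τ = Pi.single τ 1) (x : I → R) : structConstMul c (Pi.single e 1) x = x := by
  funext ρ
  simp [structConstMul, Pi.single_apply, hc]

theorem structConstMul_single_right [DecidableEq I] (c : I → I → I → R) (e : I)
    (hc : ∀ σ, c σ e = Pi.single σ 1) (x : I → R) : structConstMul c x (Pi.single e 1) = x := by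
  funext ρ
  simp [structConstMul, Pi.single_apply, hc]

end StructureConstants

theorem card_filter_eq_apply_of_bijective {α β : Type*} [Fintype α] [DecidableEq β] {f : α → β}
    (hf : Function.Bijective f) (r : β) : #{x | r = f x} = 1 := by
  obtain ⟨a, rfl⟩ := hf.2 r
  rw [card_eq_one]
  exact ⟨a, by ext x; simp [hf.1.eq_iff, eq_comm]⟩

section AddGroup

variable {G : Type*} [AddGroup G] [Fintype G] [DecidableEq G]

theorem card_filter_eq_add_left (g r : G) : #{x | r = g + x} = 1 :=
  card_filter_eq_apply_of_bijective (Equiv.addLeft g).bijective r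

theorem card_filter_eq_sub_left (g r : G) : #{x | r = g - x} = 1 :=
  card_filter_eq_apply_of_bijective (Equiv.subLeft g).bijective r

theorem card_filter_eq_sub_right (u r : G) : #{x | r = x - u} = 1 :=
  card_filter_eq_apply_of_bijective (Equiv.subRight u).bijective r

end AddGroup

theorem izumiBasisMul_assoc (n : ℕ) [NeZero n] (σ τ υ ρ : ZMod n × Bool) :
    ∑ π, izumiBasisMul n σ τ π * izumiBasisMul n π υ ρ
      = ∑ π, izumiBasisMul n τ υ π * izumiBasisMul n σ π ρ := by
  obtain ⟨g, _ | _⟩ := σ <;> obtain ⟨h, _ | _⟩ := τ <;> obtain ⟨u, _ | _⟩ := υ <;>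
    obtain ⟨r, _ | _⟩ := ρ <;>
    simp [izumiBasisMul, Fintype.sum_prod_type, Prod.ext_iff, add_mul, sum_add_distrib,
      sub_sub_eq_add_sub, add_sub_assoc, add_sub_left_comm, sub_sub, add_comm, add_left_comm,
      card_filter_eq_add_left, card_filter_eq_sub_left, card_filter_eq_sub_right]

theorem izumiBasisMul_zero_left (n : ℕ) (τ : ZMod n × Bool) :
    izumiBasisMul n (0, false) τ = Pi.single τ 1 := by
  obtain ⟨h, _ | _⟩ := τ <;> funext ρ <;> simp [izumiBasisMul, Pi.single_apply]

theorem izumiBasisMul_zero_right (n : ℕ) (σ : ZMod n × Bool) :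
    izumiBasisMul n σ (0, false) = Pi.single σ 1 := by
  obtain ⟨g, _ | _⟩ := σ <;> funext ρ <;> simp [izumiBasisMul, Pi.single_apply]

theorem izumiOne_eq_single (n : ℕ) : izumiOne n = Pi.single (0, false) 1 := by
  funext ρ; simp [izumiOne, Pi.single_apply]

theorem stmt_5_general (n : ℕ) [NeZero n] :
    (∀ x y z : ZMod n × Bool → ℤ,
        izumiMul n (izumiMul n x y) z = izumiMul n x (izumiMul n y z)) ∧
    (∀ x : ZMod n × Bool → ℤ, izumiMul n (izumiOne n) x = x) ∧
    (∀ x : ZMod n × Bool → ℤ, izumiMul n x (izumiOne n) = x) := by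
  have hmul : izumiMul n = structConstMul (izumiBasisMul n) := rfl
  rw [hmul, izumiOne_eq_single]
  exact ⟨structConstMul_assoc _ (izumiBasisMul_assoc n),
    structConstMul_single_left _ _ (izumiBasisMul_zero_left n),
    structConstMul_single_right _ _ (izumiBasisMul_zero_right n)⟩

/-- For `n ≥ 1`, the bilinear multiplication on the free `ℤ`-module with basis
`(ℤ/nℤ) × {0,1}` determined by the Izumi structure constants is associative, and `α_0` is a
two-sided unit: these structure constants define an associative unital ring structure on
`ℤ^{2n}` (the Izumi fusion ring `I₂(n)`; for `n = 3` the Haagerup fusion ring `H₆`). -/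
theorem stmt_5 (n : ℕ) [NeZero n] (hn : 1 ≤ n) :
    (∀ x y z : ZMod n × Bool → ℤ,
        izumiMul n (izumiMul n x y) z = izumiMul n x (izumiMul n y z)) ∧
    (∀ x : ZMod n × Bool → ℤ, izumiMul n (izumiOne n) x = x) ∧
    (∀ x : ZMod n × Bool → ℤ, izumiMul n x (izumiOne n) = x) :=
  stmt_5_general n
end

section
/- Let d = (3 + √13)/2 ∈ ℝ. The ℤ-linear map φ from the Haagerup fusion ring H₄ to ℝ determined on basis elements by φ(1) = 1, φ(ν) = d + 1, φ(η) = d, φ(μ) = d − 1 satisfies φ(x·y) = φ(x)·φ(y) for all x, y; that is, φ is a unital ring homomorphism H₄ → ℝ. -/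
/-!
Since `φ` is `ℤ`-linear and the product is bilinear, multiplicativity reduces to the sixteen
products of basis elements, i.e. to the vector `(1, d + 1, d, d - 1)` satisfying the fusion
rules. Each of those identities is either trivial or equivalent to `d² = 3d + 1`.
-/

open Finset

/-- Structure constants of the Haagerup fusion ring `H₄` on the basis `1, ν, η, μ`
(indices `0, 1, 2, 3`): `h4BasisMul i j k` is the coefficient of the `k`-th basis element in
the product of the `i`-th and `j`-th basis elements. -/
def h4BasisMul : Fin 4 → Fin 4 → Fin 4 → ℤ :=
  ![![![1, 0, 0, 0], ![0, 1, 0, 0], ![0, 0, 1, 0], ![0, 0, 0, 1]],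
    ![![0, 1, 0, 0], ![1, 2, 2, 1], ![0, 2, 1, 1], ![0, 1, 1, 1]],
    ![![0, 0, 1, 0], ![0, 2, 1, 1], ![1, 1, 1, 1], ![0, 1, 1, 0]],
    ![![0, 0, 0, 1], ![0, 1, 1, 1], ![0, 1, 1, 0], ![1, 1, 0, 0]]]

/-- The bilinear extension of the structure constants `h4BasisMul` to the free `ℤ`-module
`ℤ⁴` of functions `Fin 4 → ℤ`. -/
def h4Mul (x y : Fin 4 → ℤ) : Fin 4 → ℤ :=
  fun k => ∑ i : Fin 4, ∑ j : Fin 4, x i * y j * h4BasisMul i j k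

/-- The basis element `1` of the Haagerup fusion ring `H₄`. -/
def h4One : Fin 4 → ℤ := ![1, 0, 0, 0]

theorem sum_structConst_mul_eq_mul {ι R : Type*} [Fintype ι] [CommRing R] (N : ι → ι → ι → ℤ)
    (v : ι → R) (hv : ∀ i j, ∑ k, (N i j k : R) * v k = v i * v j) (x y : ι → ℤ) :
    ∑ k, ((∑ i, ∑ j, x i * y j * N i j k : ℤ) : R) * v k =
      (∑ i, (x i : R) * v i) * ∑ j, (y j : R) * v j := by
  calc ∑ k, ((∑ i, ∑ j, x i * y j * N i j k : ℤ) : R) * v k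
      = ∑ i, ∑ j, (x i : R) * y j * ∑ k, (N i j k : R) * v k := by
        push_cast
        simp only [sum_mul, mul_sum]
        rw [sum_comm]
        refine sum_congr rfl fun i _ => ?_
        rw [sum_comm]
        exact sum_congr rfl fun j _ => sum_congr rfl fun k _ => by ring
    _ = (∑ i, (x i : R) * v i) * ∑ j, (y j : R) * v j := by
        simp only [hv, sum_mul_sum]
        exact sum_congr rfl fun i _ => sum_congr rfl fun j _ => by ring

theorem sum_h4BasisMul_mul_dimVec {d : ℝ} (hd : d ^ 2 = 3 * d + 1) (i j : Fin 4) :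
    ∑ k, (h4BasisMul i j k : ℝ) * ![1, d + 1, d, d - 1] k =
      ![1, d + 1, d, d - 1] i * ![1, d + 1, d, d - 1] j := by
  fin_cases i <;> fin_cases j <;> simp [Fin.sum_univ_four, h4BasisMul] <;>
    linear_combination -hd

theorem three_add_sqrt_thirteen_div_two_sq :
    ((3 + Real.sqrt 13) / 2) ^ 2 = 3 * ((3 + Real.sqrt 13) / 2) + 1 := by
  linear_combination Real.sq_sqrt (show (0 : ℝ) ≤ 13 by norm_num) / 4

/-- Let `d = (3 + √13)/2`.  The `ℤ`-linear map `φ : H₄ → ℝ` with `φ(1) = 1`, `φ(ν) = d + 1`,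
`φ(η) = d`, `φ(μ) = d − 1` is multiplicative (and unital); that is, the Frobenius–Perron
dimension is a unital ring homomorphism `H₄ → ℝ`. -/
theorem stmt_8 :
    let d : ℝ := (3 + Real.sqrt 13) / 2
    let φ : (Fin 4 → ℤ) → ℝ := fun x =>
      (x 0 : ℝ) * 1 + (x 1 : ℝ) * (d + 1) + (x 2 : ℝ) * d + (x 3 : ℝ) * (d - 1)
    (∀ x y : Fin 4 → ℤ, φ (h4Mul x y) = φ x * φ y) ∧ φ h4One = 1 := by
  intro d φ
  have hφ : ∀ x, φ x = ∑ k, (x k : ℝ) * ![1, d + 1, d, d - 1] k := fun x => by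
    simp [φ, Fin.sum_univ_four]
  refine ⟨fun x y => ?_, by simp [φ, h4One]⟩
  simp only [hφ]
  exact sum_structConst_mul_eq_mul h4BasisMul _
    (sum_h4BasisMul_mul_dimVec three_add_sqrt_thirteen_div_two_sq) x y
end

section
/- Fix a natural number n ≥ 1 and work in the Izumi fusion ring I₂(n). Let γ = Σ_{g ∈ ℤ/nℤ} α_g + n·Σ_{g ∈ ℤ/nℤ} α_gξ, and for a basis element ρ let a(ρ) denote the coefficient of ρ in γ (so a(α_g) = 1 and a(α_gξ) = n). For basis elements ρ, σ both different from α_0, let F(ρ,σ) denote the coefficient of σ in the product γ·ρ. Then F(ρ,σ) − a(ρ)·a(σ) equals 1 if both ρ and σ are of the form α_gξ, and equals 0 if ρ or σ is of the form α_g. -/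
open Finset

/-! The coefficient `F(ρ,σ)` of `σ` in `γ·ρ` is `Σ_k N(α_k, ρ, σ) + n·Σ_k N(α_k ξ, ρ, σ)`.
Left multiplication by `α_k` permutes each of the two families `{α_g}` and `{α_g ξ}`, so the
first sum is `1` if `ρ, σ` lie in the same family and `0` otherwise. The second sum is `0` or `1`,
except when `ρ` and `σ` are both of the form `α_g ξ`: then the summand `Σ_j α_j ξ` of every
product `(α_k ξ)·ρ` contributes, and the sum is `n`. Comparing with `a(ρ)·a(σ)` leaves `1`
exactly in that case. -/

section

variable {n : ℕ} [NeZero n]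

lemma izumiMul_single_right (x : ZMod n × Bool → ℤ) (ρ σ : ZMod n × Bool) :
    izumiMul n x (fun p => if p = ρ then 1 else 0) σ = ∑ τ, x τ * izumiBasisMul n τ ρ σ := by
  unfold izumiMul
  refine sum_congr rfl fun τ _ => ?_
  simp [ite_mul]

lemma sum_ite_snd_mul_izumiBasisMul (a b : ℤ) (ρ σ : ZMod n × Bool) :
    ∑ τ : ZMod n × Bool, (if τ.2 then a else b) * izumiBasisMul n τ ρ σ =
      b * ∑ k, izumiBasisMul n (k, false) ρ σ + a * ∑ k, izumiBasisMul n (k, true) ρ σ := by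
  simp only [Fintype.sum_prod_type_right, Fintype.sum_bool, mul_sum]
  simp [add_comm]

lemma sum_izumiBasisMul_invertible (ρ σ : ZMod n × Bool) :
    ∑ k, izumiBasisMul n (k, false) ρ σ = if ρ.2 = σ.2 then 1 else 0 := by
  obtain ⟨g, _ | _⟩ := ρ <;> obtain ⟨h, _ | _⟩ := σ <;>
    simp [izumiBasisMul, Prod.ext_iff, ← sub_eq_iff_eq_add]

lemma sum_izumiBasisMul_noninvertible (ρ σ : ZMod n × Bool) :
    ∑ k, izumiBasisMul n (k, true) ρ σ =
      if ρ.2 then (if σ.2 then (n : ℤ) else 1) else (if σ.2 then 1 else 0) := by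
  obtain ⟨g, _ | _⟩ := ρ <;> obtain ⟨h, _ | _⟩ := σ <;>
    simp [izumiBasisMul, Prod.ext_iff, eq_sub_iff_add_eq]

end

theorem stmt_9_general (n : ℕ) [NeZero n] :
    let γ : ZMod n × Bool → ℤ := fun p => if p.2 = true then (n : ℤ) else 1
    ∀ ρ σ : ZMod n × Bool, ρ ≠ ((0 : ZMod n), false) → σ ≠ ((0 : ZMod n), false) →
      izumiMul n γ (fun p => if p = ρ then 1 else 0) σ - γ ρ * γ σ =
        (if ρ.2 = true ∧ σ.2 = true then 1 else 0) := by
  intro γ ρ σ _ _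
  rw [izumiMul_single_right, sum_ite_snd_mul_izumiBasisMul, sum_izumiBasisMul_invertible,
    sum_izumiBasisMul_noninvertible]
  obtain ⟨g, _ | _⟩ := ρ <;> obtain ⟨h, _ | _⟩ := σ <;> simp [γ]

/-- In the Izumi fusion ring `I₂(n)` (`n ≥ 1`), let `γ = Σ_g α_g + n·Σ_g α_g ξ`, so the
coefficient `a(ρ)` of a basis element `ρ` in `γ` is `1` on the `α_g` and `n` on the `α_g ξ`.
For basis elements `ρ, σ` different from `α_0`, let `F(ρ,σ)` be the coefficient of `σ` in
`γ·ρ`.  Then the reduced fusion matrix entry `F(ρ,σ) − a(ρ)·a(σ)` equals `1` if both `ρ` and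
`σ` are of the form `α_g ξ`, and `0` if `ρ` or `σ` is of the form `α_g`. -/
theorem stmt_9 (n : ℕ) [NeZero n] (hn : 1 ≤ n) :
    let γ : ZMod n × Bool → ℤ := fun p => if p.2 = true then (n : ℤ) else 1
    ∀ ρ σ : ZMod n × Bool, ρ ≠ ((0 : ZMod n), false) → σ ≠ ((0 : ZMod n), false) →
      izumiMul n γ (fun p => if p = ρ then 1 else 0) σ - γ ρ * γ σ =
        (if ρ.2 = true ∧ σ.2 = true then 1 else 0) :=
  stmt_9_general n
end
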